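/- Let G = K_1 ∨ (C_{k_1} ∪ C_{k_2} ∪ ⋯ ∪ C_{k_t} ∪ qK_2 ∪ sK_1) with t, q, s ≥ 1 and k_i ≥ 3 for 1 ≤ i ≤ t, and let n be the order of G. Then Σ_{v ∈ V(G)} t_G(v)·d_G(v) = (n+5)(n−s−1) − q(n+7) + 9·|{i : 1 ≤ i ≤ t, k_i = 3}|, where t_G(v) is the number of triangles of G containing v and d_G(v) is the degree of v. In particular, if k_i ≠ 3 for all i, then this sum equals (n+5)(n−s−1) − q(n+7). -/

import Mathlib

open SimpleGraph Finset

namespace Paper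

/-- The cone `K₁ ∨ G`: a new apex vertex (`none`) joined to every vertex of `G`. -/
def cone {V : Type*} (G : SimpleGraph V) : SimpleGraph (Option V) where
  Adj x y :=
    match x, y with
    | none, none => False
    | none, some _ => True
    | some _, none => True
    | some a, some b => G.Adj a b
  symm := by
    refine ⟨?_⟩
    rintro (_ | a) (_ | b) h
    · exact h
    · exact trivial
    · exact trivial
    · exact G.adj_symm h
  loopless := by
    refine ⟨?_⟩
    rintro (_ | a) h
    · exact h
    · exact G.loopless.irrefl a h

/-- Disjoint union of an indexed family of graphs. -/
def sigmaGraph {ι : Type*} {V : ι → Type*} (G : ∀ i, SimpleGraph (V i)) :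
    SimpleGraph (Σ i, V i) where
  Adj x y := ∃ (i : ι) (u v : V i), x = ⟨i, u⟩ ∧ y = ⟨i, v⟩ ∧ (G i).Adj u v
  symm := by
    refine ⟨?_⟩
    rintro x y ⟨i, u, v, rfl, rfl, h⟩
    exact ⟨i, v, u, rfl, rfl, (G i).adj_symm h⟩
  loopless := by
    refine ⟨?_⟩
    rintro x ⟨i, u, v, rfl, h2, h⟩
    injection h2 with h3 h4
    subst h4
    exact (G i).loopless.irrefl u h

/-- `q` disjoint copies of `K₂`. -/
def K2s (q : ℕ) : SimpleGraph (Σ _ : Fin q, Fin 2) :=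
  sigmaGraph fun _ => (⊤ : SimpleGraph (Fin 2))

/-- The signless Laplacian matrix `Q(G) = D(G) + A(G)`. -/
noncomputable def QMatrix {V : Type*} [Fintype V] (G : SimpleGraph V) : Matrix V V ℝ :=
  letI := Classical.decEq V
  letI := Classical.decRel G.Adj
  Matrix.diagonal (fun v => (G.degree v : ℝ)) + G.adjMatrix ℝ

/-- The signless Laplacian spectrum, as the multiset of roots of the characteristic
polynomial of `Q(G)` (with multiplicity). -/
noncomputable def Qspectrum {V : Type*} [Fintype V] (G : SimpleGraph V) : Multiset ℝ :=
  letI := Classical.decEq V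
  (QMatrix G).charpoly.roots

/-- Multiplicity of `ρ` as a signless Laplacian eigenvalue of `G`. -/
noncomputable def Qmult {V : Type*} [Fintype V] (G : SimpleGraph V) (ρ : ℝ) : ℕ :=
  (Qspectrum G).count ρ

/-- The `i`-th largest signless Laplacian eigenvalue (1-indexed), i.e. `χ_i(G)`. -/
noncomputable def Qeig {V : Type*} [Fintype V] (G : SimpleGraph V) (i : ℕ) : ℝ :=
  (((Qspectrum G).sort (· ≤ ·)).reverse).getD (i - 1) 0

/-- `G` is determined by its signless Laplacian spectrum. -/
def IsDQS {V : Type*} [Fintype V] (G : SimpleGraph V) : Prop :=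
  ∀ (W : Type) [Fintype W] (F : SimpleGraph W),
    Qspectrum F = Qspectrum G → Nonempty (F ≃g G)

/-- The number of subgraphs of `G` isomorphic to `H`. -/
noncomputable def subgraphCount {V W : Type*} (G : SimpleGraph V) (H : SimpleGraph W) : ℕ :=
  Nat.card {H' : G.Subgraph // Nonempty (H'.coe ≃g H)}

/-- The number of triangle subgraphs of `G` containing a vertex `v`. -/
noncomputable def triangleCountAt {V : Type*} (G : SimpleGraph V) (v : V) : ℕ :=
  Nat.card {H' : G.Subgraph //
    v ∈ H'.verts ∧ Nonempty (H'.coe ≃g (⊤ : SimpleGraph (Fin 3)))}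

/-- Vertex degree (with classical decidability). -/
noncomputable def deg {V : Type*} [Fintype V] (G : SimpleGraph V) (v : V) : ℕ :=
  letI := Classical.decRel G.Adj
  G.degree v

/-- The multiset of vertex degrees of `G`. -/
noncomputable def degreeMultiset {V : Type*} [Fintype V] (G : SimpleGraph V) : Multiset ℕ :=
  (Finset.univ : Finset V).val.map fun v => deg G v

/-- The maximum vertex degree of `G`. -/
noncomputable def maxDeg {V : Type*} [Fintype V] (G : SimpleGraph V) : ℕ :=
  letI := Classical.decRel G.Adj
  G.maxDegree

/-- `S_r(G) = trace(A(G)^r)`, the `r`-th spectral moment. -/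
noncomputable def Smoment {V : Type*} [Fintype V] (G : SimpleGraph V) (r : ℕ) : ℝ :=
  letI := Classical.decEq V
  letI := Classical.decRel G.Adj
  ((G.adjMatrix ℝ) ^ r).trace

/-- `T_r(G) = trace(Q(G)^r)`, the `r`-th signless Laplacian spectral moment. -/
noncomputable def Tmoment {V : Type*} [Fintype V] (G : SimpleGraph V) (r : ℕ) : ℝ :=
  letI := Classical.decEq V
  ((QMatrix G) ^ r).trace

/-- `∑_{uv ∈ E(G)} d_G(u) d_G(v)`. -/
noncomputable def edgeDegSum {V : Type*} [Fintype V] (G : SimpleGraph V) : ℕ :=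
  letI := Classical.decEq V
  letI := Classical.decRel G.Adj
  ∑ e ∈ G.edgeFinset,
    Sym2.lift ⟨fun u v => G.degree u * G.degree v, fun _ _ => Nat.mul_comm _ _⟩ e

/-- The coalescence of `G` at `v` with the apex of `K₁ ∨ r K₂`: add `2r` new vertices
`a_i, b_i` and edges `a_i b_i`, `v a_i`, `v b_i`. -/
def coalescenceK2s {V : Type*} (G : SimpleGraph V) (v : V) (r : ℕ) :
    SimpleGraph (V ⊕ (Fin r × Fin 2)) where
  Adj x y :=
    match x, y with
    | Sum.inl a, Sum.inl b => G.Adj a b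
    | Sum.inl a, Sum.inr _ => a = v
    | Sum.inr _, Sum.inl b => b = v
    | Sum.inr p, Sum.inr p' => p.1 = p'.1 ∧ p.2 ≠ p'.2
  symm := by
    refine ⟨?_⟩
    rintro (a | p) (b | p') h
    · exact G.adj_symm h
    · exact h
    · exact h
    · exact ⟨h.1.symm, h.2.symm⟩
  loopless := by
    refine ⟨?_⟩
    rintro (a | p) h
    · exact G.loopless.irrefl a h
    · exact h.2 rfl


/-- `K₁ ∨ (C_{k 0} ∪ ⋯ ∪ C_{k (t-1)} ∪ q K₂ ∪ s K₁)`. -/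
def coneCycles {t : ℕ} (k : Fin t → ℕ) (q s : ℕ) :
    SimpleGraph (Option ((Σ i, Fin (k i)) ⊕ ((Σ _ : Fin q, Fin 2) ⊕ Fin s))) :=
  cone ((sigmaGraph fun i => cycleGraph (k i)) ⊕g (K2s q ⊕g (⊥ : SimpleGraph (Fin s))))

/-- `K₁ ∨ (C_k ∪ q K₂ ∪ s K₁)`. -/
def coneOneCycle (k q s : ℕ) :
    SimpleGraph (Option (Fin k ⊕ ((Σ _ : Fin q, Fin 2) ⊕ Fin s))) :=
  cone (cycleGraph k ⊕g (K2s q ⊕g (⊥ : SimpleGraph (Fin s))))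

/-- `K₁ ∨ (C₄ ∪ P_{k-3} ∪ P₃ ∪ (q-2) K₂ ∪ s K₁)`. -/
def coneAlt (k q s : ℕ) :
    SimpleGraph (Option (Fin 4 ⊕ (Fin (k - 3) ⊕ (Fin 3 ⊕ ((Σ _ : Fin (q - 2), Fin 2) ⊕ Fin s))))) :=
  cone (cycleGraph 4 ⊕g (pathGraph (k - 3) ⊕g (pathGraph 3 ⊕g
    (K2s (q - 2) ⊕g (⊥ : SimpleGraph (Fin s))))))

/-- `K₁ ∨ (C₃ ∪ C_{k 0} ∪ ⋯ ∪ C_{k (t'-1)} ∪ q K₂ ∪ s K₁)`. -/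
def coneC3Cycles {t' : ℕ} (k : Fin t' → ℕ) (q s : ℕ) :
    SimpleGraph (Option (Fin 3 ⊕ ((Σ i, Fin (k i)) ⊕ ((Σ _ : Fin q, Fin 2) ⊕ Fin s)))) :=
  cone (cycleGraph 3 ⊕g ((sigmaGraph fun i => cycleGraph (k i)) ⊕g
    (K2s q ⊕g (⊥ : SimpleGraph (Fin s)))))

/-- `K₁ ∨ (K_{1,3} ∪ C_{k 0} ∪ ⋯ ∪ C_{k (t'-1)} ∪ q K₂ ∪ s' K₁)`. -/
def coneStar {t' : ℕ} (k : Fin t' → ℕ) (q s' : ℕ) :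
    SimpleGraph (Option ((Fin 1 ⊕ Fin 3) ⊕ ((Σ i, Fin (k i)) ⊕ ((Σ _ : Fin q, Fin 2) ⊕ Fin s')))) :=
  cone (completeBipartiteGraph (Fin 1) (Fin 3) ⊕g ((sigmaGraph fun i => cycleGraph (k i)) ⊕g
    (K2s q ⊕g (⊥ : SimpleGraph (Fin s')))))

/-- `K₁ ∨ (P_{l 0} ∪ ⋯ ∪ P_{l (q-1)} ∪ s K₁)`. -/
def conePaths {q : ℕ} (l : Fin q → ℕ) (s : ℕ) :
    SimpleGraph (Option ((Σ i, Fin (l i)) ⊕ Fin s)) :=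
  cone ((sigmaGraph fun i => pathGraph (l i)) ⊕g (⊥ : SimpleGraph (Fin s)))

/-- `K₁ ∨ (C_{k 0} ∪ ⋯ ∪ C_{k (z-1)} ∪ P_{l 0} ∪ ⋯ ∪ P_{l (q-1)} ∪ s K₁)`. -/
def coneCyclesPaths {z q : ℕ} (k : Fin z → ℕ) (l : Fin q → ℕ) (s : ℕ) :
    SimpleGraph (Option ((Σ i, Fin (k i)) ⊕ ((Σ i, Fin (l i)) ⊕ Fin s))) :=
  cone ((sigmaGraph fun i => cycleGraph (k i)) ⊕g
    ((sigmaGraph fun i => pathGraph (l i)) ⊕g (⊥ : SimpleGraph (Fin s))))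

/-- The quartic polynomial `p_{n,q,s}` from the paper. -/
noncomputable def quartic (n q s : ℕ) (x : ℝ) : ℝ :=
  x ^ 4 - ((n : ℝ) + 8) * x ^ 3 + (8 * (n : ℝ) + 15) * x ^ 2
    + (4 * (q : ℝ) + 4 * (s : ℝ) - 19 * (n : ℝ) + 4) * x
    + (12 * (n : ℝ) - 4 * (q : ℝ) - 12 * (s : ℝ) - 12)

/-- The multiset `{3 + 2 cos (2jπ/k_i) : 1 ≤ j ≤ k_i - 1, 1 ≤ i ≤ t}`. -/
noncomputable def cycleEigs {t : ℕ} (k : Fin t → ℕ) : Multiset ℝ :=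
  ∑ i : Fin t, (Multiset.range (k i - 1)).map
    (fun j => 3 + 2 * Real.cos (2 * ((j : ℝ) + 1) * Real.pi / (k i : ℝ)))

/-! A triangle through `v` is `v` together with an edge inside its neighbourhood, so `t_G(v)` is
the number of adjacent pairs of neighbours of `v`. In a cone `K₁ ∨ H` the apex sees every edge
of `H`, while a vertex `w` of `H` sees the edges `w x` of `H` (closed up through the apex) and
its triangles in `H`: `t(apex) = e(H)`, `t(w) = d_H(w) + t_H(w)` and `d(w) = d_H(w) + 1`. For
`H = C_{k_1} ∪ ⋯ ∪ C_{k_t} ∪ qK₂ ∪ sK₁` these local quantities are read off component by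
component (a vertex of `C_k` lies in a triangle only when `k = 3`), and `e(H)` follows from the
handshake lemma. -/

variable {V W : Type*}

def adjacentPairs (G : SimpleGraph V) (S : Set V) : Set (Set V) :=
  {P | P ⊆ S ∧ G.IsClique P ∧ P.ncard = 2}

lemma subgraph_adj_iff_of_iso_top {G : SimpleGraph V} {α : Type*} {H : G.Subgraph}
    (e : H.coe ≃g (⊤ : SimpleGraph α)) {a b : V} :
    H.Adj a b ↔ a ∈ H.verts ∧ b ∈ H.verts ∧ a ≠ b := by
  refine ⟨fun h => ⟨H.edge_vert h, H.edge_vert h.symm, h.ne⟩, fun ⟨ha, hb, hab⟩ => ?_⟩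
  have : (⊤ : SimpleGraph α).Adj (e ⟨a, ha⟩) (e ⟨b, hb⟩) :=
    e.injective.ne (by simpa using hab)
  exact e.map_adj_iff.1 this

lemma nonempty_induce_iso_top_of_isClique {G : SimpleGraph V} {S : Set V} (hS : G.IsClique S)
    {n : ℕ} (hcard : S.ncard = n) (hn : n ≠ 0) :
    Nonempty (((⊤ : G.Subgraph).induce S).coe ≃g (⊤ : SimpleGraph (Fin n))) := by
  have : Finite ((⊤ : G.Subgraph).induce S).verts := Set.finite_of_ncard_ne_zero (hcard ▸ hn)
  refine ⟨⟨Finite.equivFinOfCardEq hcard, fun {x y} => ?_⟩⟩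
  simp only [top_adj, ne_eq, EmbeddingLike.apply_eq_iff_eq, Subgraph.coe_adj,
    Subgraph.induce_adj, Subgraph.top_adj]
  exact ⟨fun h => ⟨x.2, y.2, hS x.2 y.2 (Subtype.coe_injective.ne h)⟩,
    fun h h' => h.2.2.ne (congrArg _ h')⟩

lemma triangleCountAt_eq_ncard_cliques (G : SimpleGraph V) (v : V) :
    triangleCountAt G v = {S : Set V | v ∈ S ∧ G.IsClique S ∧ S.ncard = 3}.ncard := by
  rw [triangleCountAt, ← Nat.card_coe_set_eq]
  symm
  refine Nat.card_eq_of_bijective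
    (fun S => ⟨(⊤ : G.Subgraph).induce S.1, S.2.1,
      nonempty_induce_iso_top_of_isClique S.2.2.1 S.2.2.2 three_ne_zero⟩)
    ⟨fun S T h => Subtype.ext (by simpa using congrArg (fun H => H.1.verts) h), ?_⟩
  rintro ⟨H, hv, ⟨e⟩⟩
  have hadj {a b : V} := subgraph_adj_iff_of_iso_top e (a := a) (b := b)
  refine ⟨⟨H.verts, hv, fun a ha b hb hab => H.adj_sub (hadj.2 ⟨ha, hb, hab⟩), ?_⟩, ?_⟩
  · rw [← Nat.card_coe_set_eq, Nat.card_congr e.toEquiv, Nat.card_fin]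
  · refine Subtype.ext (Subgraph.ext rfl ?_)
    ext a b
    simp only [Subgraph.induce_adj, Subgraph.top_adj, hadj]
    exact ⟨fun ⟨ha, hb, h⟩ => ⟨ha, hb, h.ne⟩,
      fun ⟨ha, hb, h⟩ => ⟨ha, hb, H.adj_sub (hadj.2 ⟨ha, hb, h⟩)⟩⟩

lemma triangleCountAt_eq_ncard_adjacentPairs (G : SimpleGraph V) (v : V) :
    triangleCountAt G v = (adjacentPairs G (G.neighborSet v)).ncard := by
  rw [triangleCountAt_eq_ncard_cliques, ← Nat.card_coe_set_eq, ← Nat.card_coe_set_eq]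
  refine Nat.card_congr
    { toFun := fun S => ⟨S.1 \ {v}, ?_⟩
      invFun := fun P => ⟨insert v P.1, ?_⟩
      left_inv := fun S => Subtype.ext (Set.insert_sdiff_self_of_mem S.2.1)
      right_inv := fun P => Subtype.ext (Set.insert_sdiff_self_of_notMem (G.irrefl <| P.2.1 ·)) }
  · obtain ⟨S, hvS, hS, hcard⟩ := S
    refine ⟨fun x hx => hS hvS hx.1 (Ne.symm hx.2), hS.subset Set.sdiff_subset, ?_⟩
    rw [Set.ncard_sdiff_singleton_of_mem hvS, hcard]
  · obtain ⟨P, hPN, hP, hcard⟩ := P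
    refine ⟨Set.mem_insert v P, isClique_insert.2 ⟨hP, fun b hb _ => hPN hb⟩, ?_⟩
    rw [Set.ncard_insert_of_notMem (G.irrefl <| hPN ·) (Set.finite_of_ncard_ne_zero (by omega)),
      hcard]

lemma isClique_image_iff {G : SimpleGraph V} {G' : SimpleGraph W} (f : G ↪g G') (P : Set V) :
    G'.IsClique (f '' P) ↔ G.IsClique P := by
  rw [IsClique, f.injective.injOn.pairwise_image]
  simp only [Set.Pairwise, f.map_adj_iff, IsClique]

lemma adjacentPairs_image {G : SimpleGraph V} {G' : SimpleGraph W} (f : G ↪g G') (S : Set V) :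
    adjacentPairs G' (f '' S) = (f '' ·) '' adjacentPairs G S := by
  ext P
  constructor
  · rintro ⟨hPS, hP, hcard⟩
    obtain ⟨Q, hQS, rfl⟩ := Set.subset_image_iff.1 hPS
    rw [isClique_image_iff, Set.ncard_image_of_injective _ f.injective] at *
    exact ⟨Q, ⟨hQS, hP, hcard⟩, rfl⟩
  · rintro ⟨Q, ⟨hQS, hQ, hcard⟩, rfl⟩
    exact ⟨Set.image_mono hQS, (isClique_image_iff f Q).2 hQ,
      (Set.ncard_image_of_injective _ f.injective).trans hcard⟩

lemma ncard_adjacentPairs_image {G : SimpleGraph V} {G' : SimpleGraph W} (f : G ↪g G')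
    (S : Set V) : (adjacentPairs G' (f '' S)).ncard = (adjacentPairs G S).ncard := by
  rw [adjacentPairs_image, Set.ncard_image_of_injective _ (Set.image_injective.2 f.injective)]

lemma adjacentPairs_insert {G : SimpleGraph V} {a : V} {T : Set V}
    (ha : a ∉ T) (hT : T ⊆ G.neighborSet a) :
    adjacentPairs G (insert a T) = (fun x => {a, x}) '' T ∪ adjacentPairs G T := by
  ext P
  constructor
  · rintro ⟨hPT, hP, hcard⟩
    by_cases haP : a ∈ P
    · obtain ⟨x, hx⟩ := Set.ncard_eq_one.1 <| by
        rw [Set.ncard_sdiff_singleton_of_mem haP, hcard]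
      have hxP : x ∈ P \ {a} := hx ▸ rfl
      refine Or.inl ⟨x, (hPT hxP.1).resolve_left hxP.2, ?_⟩
      change insert a {x} = P
      rw [← hx, Set.insert_sdiff_self_of_mem haP]
    · exact Or.inr ⟨fun x hx => (hPT hx).resolve_left (ne_of_mem_of_not_mem hx haP), hP, hcard⟩
  · rintro (⟨x, hxT, rfl⟩ | ⟨hPT, hP, hcard⟩)
    · have hax : a ≠ x := (ne_of_mem_of_not_mem hxT ha).symm
      exact ⟨Set.insert_subset_insert (Set.singleton_subset_iff.2 hxT),
        isClique_pair.2 fun _ => hT hxT, Set.ncard_pair hax⟩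
    · exact ⟨hPT.trans (Set.subset_insert a T), hP, hcard⟩

lemma ncard_adjacentPairs_insert [Finite V] {G : SimpleGraph V} {a : V} {T : Set V}
    (ha : a ∉ T) (hT : T ⊆ G.neighborSet a) :
    (adjacentPairs G (insert a T)).ncard = T.ncard + (adjacentPairs G T).ncard := by
  rw [adjacentPairs_insert ha hT, Set.ncard_union_eq, Set.InjOn.ncard_image]
  · exact fun x hx y _ hxy =>
      (Set.pair_eq_pair_iff.1 hxy).elim And.right fun h => absurd (h.2 ▸ hx) ha
  · exact Set.disjoint_left.2 fun P ⟨x, _, hP⟩ ⟨hPT, _⟩ =>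
      ha (hPT (hP ▸ Set.mem_insert a _))

lemma ncard_adjacentPairs_pair (G : SimpleGraph V) (a b : V) [Decidable (G.Adj a b)] :
    (adjacentPairs G {a, b}).ncard = if G.Adj a b then 1 else 0 := by
  have hsub : adjacentPairs G {a, b} ⊆ {{a, b}} := fun P ⟨hP, _, hcard⟩ =>
    Set.eq_of_subset_of_ncard_le hP (by rw [hcard]; simpa using Set.ncard_insert_le a {b})
      (Set.toFinite _)
  split_ifs with h
  · rw [hsub.antisymm (Set.singleton_subset_iff.2
      ⟨subset_rfl, isClique_pair.2 fun _ => h, Set.ncard_pair h.ne⟩), Set.ncard_singleton]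
  · rw [Set.eq_empty_of_forall_notMem (s := adjacentPairs G {a, b}) fun P hP => h ?_,
      Set.ncard_empty]
    obtain ⟨-, hclique, hcard⟩ := hsub hP ▸ hP
    refine isClique_pair.1 hclique fun hab => ?_
    simp [hab] at hcard

lemma adjacentPairs_eq_empty [Finite V] (G : SimpleGraph V) {S : Set V} (hS : S.ncard ≤ 1) :
    adjacentPairs G S = ∅ :=
  Set.eq_empty_of_forall_notMem fun _ ⟨hPS, _, hcard⟩ => by
    have := Set.ncard_le_ncard hPS
    omega

lemma adjacentPairs_univ (G : SimpleGraph V) :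
    adjacentPairs G Set.univ = (fun e : Sym2 V => {x | x ∈ e}) '' G.edgeSet := by
  have hpair (x y : V) : {z | z ∈ s(x, y)} = ({x, y} : Set V) := by ext; simp
  ext P
  constructor
  · rintro ⟨-, hP, hcard⟩
    obtain ⟨x, y, hxy, rfl⟩ := Set.ncard_eq_two.1 hcard
    exact ⟨s(x, y), isClique_pair.1 hP hxy, hpair x y⟩
  · rintro ⟨e, he, rfl⟩
    induction e using Sym2.ind with
    | h x y =>
      rw [mem_edgeSet] at he
      show {z | z ∈ s(x, y)} ∈ _
      rw [hpair x y]
      exact ⟨Set.subset_univ _, isClique_pair.2 fun _ => he, Set.ncard_pair he.ne⟩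

lemma ncard_adjacentPairs_univ (G : SimpleGraph V) :
    (adjacentPairs G Set.univ).ncard = G.edgeSet.ncard := by
  rw [adjacentPairs_univ, Set.ncard_image_of_injective _ fun e e' h => Sym2.ext fun x => ?_]
  exact Set.ext_iff.1 h x

lemma deg_eq_ncard [Fintype V] (G : SimpleGraph V) (v : V) : deg G v = (G.neighborSet v).ncard := by
  classical
  rw [deg, ← card_neighborSet_eq_degree, ← Nat.card_eq_fintype_card, Nat.card_coe_set_eq]

lemma sum_deg_eq_two_mul_ncard_edgeSet [Fintype V] (G : SimpleGraph V) :
    ∑ v, deg G v = 2 * G.edgeSet.ncard := by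
  classical
  simp only [deg_eq_ncard, ← Nat.card_coe_set_eq, Nat.card_eq_fintype_card,
    card_neighborSet_eq_degree]
  rw [sum_degrees_eq_twice_card_edges, card_edgeSet]

lemma triangleCountAt_eq_of_neighborSet_eq_image {G : SimpleGraph V} {G' : SimpleGraph W}
    (f : G ↪g G') {v : V} (h : G'.neighborSet (f v) = f '' G.neighborSet v) :
    triangleCountAt G' (f v) = triangleCountAt G v := by
  rw [triangleCountAt_eq_ncard_adjacentPairs, triangleCountAt_eq_ncard_adjacentPairs, h,
    ncard_adjacentPairs_image]

lemma deg_eq_of_neighborSet_eq_image [Fintype V] [Fintype W] {G : SimpleGraph V}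
    {G' : SimpleGraph W} (f : G ↪g G') {v : V} (h : G'.neighborSet (f v) = f '' G.neighborSet v) :
    deg G' (f v) = deg G v := by
  rw [deg_eq_ncard, deg_eq_ncard, h, Set.ncard_image_of_injective _ f.injective]

section DisjointUnion

variable (G : SimpleGraph V) (H : SimpleGraph W)

@[simp] lemma triangleCountAt_sum_inl (v : V) :
    triangleCountAt (G ⊕g H) (Sum.inl v) = triangleCountAt G v :=
  triangleCountAt_eq_of_neighborSet_eq_image Embedding.sumInl (neighborSet_sum_inl v)

@[simp] lemma triangleCountAt_sum_inr (w : W) :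
    triangleCountAt (G ⊕g H) (Sum.inr w) = triangleCountAt H w :=
  triangleCountAt_eq_of_neighborSet_eq_image Embedding.sumInr (neighborSet_sum_inr w)

@[simp] lemma deg_sum_inl [Fintype V] [Fintype W] (v : V) : deg (G ⊕g H) (Sum.inl v) = deg G v :=
  deg_eq_of_neighborSet_eq_image Embedding.sumInl (neighborSet_sum_inl v)

@[simp] lemma deg_sum_inr [Fintype V] [Fintype W] (w : W) : deg (G ⊕g H) (Sum.inr w) = deg H w :=
  deg_eq_of_neighborSet_eq_image Embedding.sumInr (neighborSet_sum_inr w)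

end DisjointUnion

section SigmaGraph

variable {ι : Type*} {α : ι → Type*} (G : ∀ i, SimpleGraph (α i))

lemma sigmaGraph_adj_mk {i : ι} {u w : α i} :
    (sigmaGraph G).Adj ⟨i, u⟩ ⟨i, w⟩ ↔ (G i).Adj u w := by
  constructor
  · rintro ⟨j, u', w', hu, hw, h⟩
    obtain ⟨rfl, hu⟩ := Sigma.mk.inj_iff.1 hu
    obtain ⟨-, hw⟩ := Sigma.mk.inj_iff.1 hw
    rwa [eq_of_heq hu, eq_of_heq hw]
  · exact fun h => ⟨i, u, w, rfl, rfl, h⟩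

def sigmaGraphEmbedding (i : ι) : G i ↪g sigmaGraph G :=
  ⟨Function.Embedding.sigmaMk i, sigmaGraph_adj_mk G⟩

lemma neighborSet_sigmaGraph (i : ι) (u : α i) :
    (sigmaGraph G).neighborSet ⟨i, u⟩ = Sigma.mk i '' (G i).neighborSet u := by
  ext x
  constructor
  · rintro ⟨i', u', w, hu, rfl, h⟩
    obtain ⟨rfl, hu⟩ := Sigma.mk.inj_iff.1 hu
    exact ⟨w, by rwa [eq_of_heq hu], rfl⟩
  · rintro ⟨w, hw, rfl⟩
    exact (sigmaGraph_adj_mk G).2 hw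

@[simp] lemma triangleCountAt_sigmaGraph (i : ι) (u : α i) :
    triangleCountAt (sigmaGraph G) ⟨i, u⟩ = triangleCountAt (G i) u :=
  triangleCountAt_eq_of_neighborSet_eq_image (sigmaGraphEmbedding G i)
    (neighborSet_sigmaGraph G i u)

@[simp] lemma deg_sigmaGraph [Fintype ι] [∀ i, Fintype (α i)] (i : ι) (u : α i) :
    deg (sigmaGraph G) ⟨i, u⟩ = deg (G i) u :=
  deg_eq_of_neighborSet_eq_image (sigmaGraphEmbedding G i) (neighborSet_sigmaGraph G i u)

end SigmaGraph

section Cone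

variable (H : SimpleGraph W)

def coneEmbedding : H ↪g cone H := ⟨Function.Embedding.some, Iff.rfl⟩

lemma neighborSet_cone_none : (cone H).neighborSet none = some '' Set.univ := by
  ext (_ | w) <;> simp [cone]

lemma neighborSet_cone_some (w : W) :
    (cone H).neighborSet (some w) = insert none (some '' H.neighborSet w) := by
  ext (_ | w) <;> simp [cone]

lemma triangleCountAt_cone_none : triangleCountAt (cone H) none = H.edgeSet.ncard := by
  rw [triangleCountAt_eq_ncard_adjacentPairs, neighborSet_cone_none, ← ncard_adjacentPairs_univ]
  exact ncard_adjacentPairs_image (coneEmbedding H) _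

lemma triangleCountAt_cone_some [Fintype W] (w : W) :
    triangleCountAt (cone H) (some w) = deg H w + triangleCountAt H w := by
  rw [triangleCountAt_eq_ncard_adjacentPairs, neighborSet_cone_some,
    ncard_adjacentPairs_insert (by simp) (by rintro _ ⟨x, -, rfl⟩; trivial),
    Set.ncard_image_of_injective _ (Option.some_injective W), deg_eq_ncard,
    triangleCountAt_eq_ncard_adjacentPairs]
  exact congrArg _ (ncard_adjacentPairs_image (coneEmbedding H) _)

lemma deg_cone_none [Fintype W] : deg (cone H) none = Fintype.card W := by
  rw [deg_eq_ncard, neighborSet_cone_none, Set.ncard_image_of_injective _ (Option.some_injective W),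
    Set.ncard_univ, Nat.card_eq_fintype_card]

lemma deg_cone_some [Fintype W] (w : W) : deg (cone H) (some w) = deg H w + 1 := by
  rw [deg_eq_ncard, neighborSet_cone_some, Set.ncard_insert_of_notMem (by simp),
    Set.ncard_image_of_injective _ (Option.some_injective W), deg_eq_ncard]

lemma sum_triangleCountAt_mul_deg_cone [Fintype W] :
    ∑ v, triangleCountAt (cone H) v * deg (cone H) v =
      H.edgeSet.ncard * Fintype.card W +
        ∑ w, (deg H w + triangleCountAt H w) * (deg H w + 1) := by
  simp only [Fintype.sum_option, triangleCountAt_cone_none, deg_cone_none,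
    triangleCountAt_cone_some, deg_cone_some]

end Cone

lemma triangleCountAt_eq_zero_of_deg_le_one [Fintype V] {G : SimpleGraph V} {v : V}
    (h : deg G v ≤ 1) : triangleCountAt G v = 0 := by
  rw [triangleCountAt_eq_ncard_adjacentPairs, adjacentPairs_eq_empty G (deg_eq_ncard G v ▸ h),
    Set.ncard_empty]

lemma deg_top_fin_two (x : Fin 2) : deg (⊤ : SimpleGraph (Fin 2)) x = 1 := by
  rw [deg_eq_ncard, neighborSet_top, Set.ncard_compl, Set.ncard_singleton, Nat.card_fin]

lemma deg_bot [Fintype V] (v : V) : deg (⊥ : SimpleGraph V) v = 0 := by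
  rw [deg_eq_ncard, neighborSet_bot, Set.ncard_empty]

lemma triangleCountAt_top_fin_two (x : Fin 2) : triangleCountAt (⊤ : SimpleGraph (Fin 2)) x = 0 :=
  triangleCountAt_eq_zero_of_deg_le_one (deg_top_fin_two x).le

lemma triangleCountAt_bot [Fintype V] (v : V) : triangleCountAt (⊥ : SimpleGraph V) v = 0 :=
  triangleCountAt_eq_zero_of_deg_le_one ((deg_bot v).trans_le zero_le_one)

section Cycle

open Fin.CommRing

lemma cycleGraph_adj_sub_one_add_one {m : ℕ} (u : Fin (m + 3)) :
    (cycleGraph (m + 3)).Adj (u - 1) (u + 1) ↔ m = 0 := by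
  rw [cycleGraph_adj, show u - 1 - (u + 1) = -2 by ring, show u + 1 - (u - 1) = 2 by ring]
  rcases m with _ | m
  · decide
  · simp [Fin.ext_iff, Nat.mod_eq_of_lt, Fin.val_neg]

lemma triangleCountAt_cycleGraph {k : ℕ} (hk : 3 ≤ k) (u : Fin k) :
    triangleCountAt (cycleGraph k) u = if k = 3 then 1 else 0 := by
  obtain ⟨m, rfl⟩ := Nat.exists_eq_add_of_le' hk
  rw [triangleCountAt_eq_ncard_adjacentPairs, cycleGraph_neighborSet, ncard_adjacentPairs_pair]
  simp [cycleGraph_adj_sub_one_add_one]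

lemma deg_cycleGraph {k : ℕ} (hk : 3 ≤ k) (u : Fin k) : deg (cycleGraph k) u = 2 := by
  obtain ⟨m, rfl⟩ := Nat.exists_eq_add_of_le' hk
  rw [deg_eq_ncard, ← Nat.card_coe_set_eq, Nat.card_eq_fintype_card, card_neighborSet_eq_degree,
    cycleGraph_degree_three_le]

end Cycle

def cyclesK2sK1s {t : ℕ} (k : Fin t → ℕ) (q s : ℕ) :
    SimpleGraph ((Σ i, Fin (k i)) ⊕ ((Σ _ : Fin q, Fin 2) ⊕ Fin s)) :=
  (sigmaGraph fun i => cycleGraph (k i)) ⊕g (K2s q ⊕g ⊥)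

lemma coneCycles_eq_cone {t : ℕ} (k : Fin t → ℕ) (q s : ℕ) :
    coneCycles k q s = cone (cyclesK2sK1s k q s) := rfl

section CyclesK2sK1s

variable {t : ℕ} {k : Fin t → ℕ} (q s : ℕ)

lemma card_vertices_cyclesK2sK1s :
    Fintype.card ((Σ i, Fin (k i)) ⊕ ((Σ _ : Fin q, Fin 2) ⊕ Fin s)) =
      ∑ i, k i + 2 * q + s := by
  simp only [Fintype.card_sum, Fintype.card_sigma, Fintype.card_fin, sum_const, card_univ,
    smul_eq_mul]
  ring

lemma sum_deg_cyclesK2sK1s (hk : ∀ i, 3 ≤ k i) :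
    ∑ w, deg (cyclesK2sK1s k q s) w = 2 * ∑ i, k i + 2 * q := by
  simp only [cyclesK2sK1s, K2s, Fintype.sum_sum_type, Fintype.sum_sigma, deg_sum_inl, deg_sum_inr,
    deg_sigmaGraph, deg_cycleGraph (hk _), deg_top_fin_two, deg_bot, sum_const, card_univ,
    Fintype.card_fin, smul_eq_mul, ← sum_mul, mul_one]
  ring

lemma sum_deg_add_triangleCountAt_mul_deg_add_one_cyclesK2sK1s (hk : ∀ i, 3 ≤ k i) :
    ∑ w, (deg (cyclesK2sK1s k q s) w + triangleCountAt (cyclesK2sK1s k q s) w) *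
      (deg (cyclesK2sK1s k q s) w + 1) = 6 * ∑ i, k i + 9 * #{i | k i = 3} + 4 * q := by
  simp only [cyclesK2sK1s, K2s, Fintype.sum_sum_type, Fintype.sum_sigma, deg_sum_inl, deg_sum_inr,
    triangleCountAt_sum_inl, triangleCountAt_sum_inr, deg_sigmaGraph, triangleCountAt_sigmaGraph,
    deg_cycleGraph (hk _), triangleCountAt_cycleGraph (hk _), deg_top_fin_two, deg_bot,
    triangleCountAt_top_fin_two, triangleCountAt_bot, sum_const, card_univ, Fintype.card_fin,
    smul_eq_mul, add_zero]
  have hcycle (i : Fin t) : k i * ((2 + if k i = 3 then 1 else 0) * 3) =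
      6 * k i + 9 * if k i = 3 then 1 else 0 := by
    split_ifs <;> omega
  simp only [hcycle, Finset.sum_add_distrib, ← Finset.mul_sum, Finset.card_filter]
  ring

end CyclesK2sK1s

theorem triangle_degree_sum_coneCycles_general
    (t q s n : ℕ)
    (k : Fin t → ℕ) (hk : ∀ i, 3 ≤ k i)
    (hn : n = Fintype.card (Option ((Σ i, Fin (k i)) ⊕ ((Σ _ : Fin q, Fin 2) ⊕ Fin s)))) :
    (∑ v : Option ((Σ i, Fin (k i)) ⊕ ((Σ _ : Fin q, Fin 2) ⊕ Fin s)),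
        (triangleCountAt (coneCycles k q s) v : ℤ) * (deg (coneCycles k q s) v : ℤ)) =
      ((n : ℤ) + 5) * ((n : ℤ) - (s : ℤ) - 1) - (q : ℤ) * ((n : ℤ) + 7)
        + 9 * ((Finset.univ.filter fun i => k i = 3).card : ℤ) ∧
    ((∀ i, k i ≠ 3) →
      (∑ v : Option ((Σ i, Fin (k i)) ⊕ ((Σ _ : Fin q, Fin 2) ⊕ Fin s)),
          (triangleCountAt (coneCycles k q s) v : ℤ) * (deg (coneCycles k q s) v : ℤ)) =
        ((n : ℤ) + 5) * ((n : ℤ) - (s : ℤ) - 1) - (q : ℤ) * ((n : ℤ) + 7)) := by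
  have hedges : (cyclesK2sK1s k q s).edgeSet.ncard = ∑ i, k i + q := by
    have := sum_deg_eq_two_mul_ncard_edgeSet (cyclesK2sK1s k q s)
    rw [sum_deg_cyclesK2sK1s q s hk] at this
    omega
  have hcone : ∑ v, triangleCountAt (coneCycles k q s) v * deg (coneCycles k q s) v =
      (∑ i, k i + q) * (∑ i, k i + 2 * q + s) +
        (6 * ∑ i, k i + 9 * #{i | k i = 3} + 4 * q) := by
    rw [coneCycles_eq_cone, sum_triangleCountAt_mul_deg_cone, hedges, card_vertices_cyclesK2sK1s,
      sum_deg_add_triangleCountAt_mul_deg_add_one_cyclesK2sK1s q s hk]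
  have main :
      (∑ v, (triangleCountAt (coneCycles k q s) v : ℤ) * (deg (coneCycles k q s) v : ℤ)) =
      ((n : ℤ) + 5) * ((n : ℤ) - (s : ℤ) - 1) - (q : ℤ) * ((n : ℤ) + 7)
        + 9 * ((Finset.univ.filter fun i => k i = 3).card : ℤ) := by
    simp only [← Nat.cast_mul, ← Nat.cast_sum, hcone, hn, Fintype.card_option,
      card_vertices_cyclesK2sK1s]
    push_cast
    ring
  refine ⟨main, fun hne => ?_⟩
  rw [main, Finset.filter_false_of_mem fun i _ => hne i, Finset.card_empty]
  simp

/-- Lemma 4.2 (iii): for `G = K₁ ∨ (C_{k₁} ∪ ⋯ ∪ C_{k_t} ∪ q K₂ ∪ s K₁)` of order `n`,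
`∑_v t_G(v) d_G(v) = (n+5)(n-s-1) - q(n+7) + 9 |{i : k_i = 3}|`; in particular, if no
`k_i` equals `3`, the sum is `(n+5)(n-s-1) - q(n+7)`. -/
theorem triangle_degree_sum_coneCycles
    (t q s n : ℕ) (ht : 1 ≤ t) (hq : 1 ≤ q) (hs : 1 ≤ s)
    (k : Fin t → ℕ) (hk : ∀ i, 3 ≤ k i)
    (hn : n = Fintype.card (Option ((Σ i, Fin (k i)) ⊕ ((Σ _ : Fin q, Fin 2) ⊕ Fin s)))) :
    (∑ v : Option ((Σ i, Fin (k i)) ⊕ ((Σ _ : Fin q, Fin 2) ⊕ Fin s)),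
        (triangleCountAt (coneCycles k q s) v : ℤ) * (deg (coneCycles k q s) v : ℤ)) =
      ((n : ℤ) + 5) * ((n : ℤ) - (s : ℤ) - 1) - (q : ℤ) * ((n : ℤ) + 7)
        + 9 * ((Finset.univ.filter fun i => k i = 3).card : ℤ) ∧
    ((∀ i, k i ≠ 3) →
      (∑ v : Option ((Σ i, Fin (k i)) ⊕ ((Σ _ : Fin q, Fin 2) ⊕ Fin s)),
          (triangleCountAt (coneCycles k q s) v : ℤ) * (deg (coneCycles k q s) v : ℤ)) =
        ((n : ℤ) + 5) * ((n : ℤ) - (s : ℤ) - 1) - (q : ℤ) * ((n : ℤ) + 7)) :=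
  triangle_degree_sum_coneCycles_general t q s n k hk hn

end Paper
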